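/- arXiv:1403.5979 — 4 statements merged into one kernel-verified Lean document; each statement's English description precedes it below -/
import Mathlib

section
/- Let k be an algebraically closed field and I, J ideals of k[x₁,...,xₙ]. Then the variety of the saturation I : J^∞ equals the Zariski closure of V(I) \ V(J). -/
/-!
A point of `V(I) \ V(J)` lies off the zero set of some `h ∈ J`, so `f * h ^ m ∈ I` forces `f` to
vanish there. Conversely, if `g` vanishes on `V(I) \ V(J)` then every `g * j` with `j ∈ J`
vanishes on `V(I)`, hence lies in `√I` by the Nullstellensatz; as `J` is finitely generated,
some power `(g J) ^ t = g ^ t J ^ t` lies in `I`, so `g ∈ √(I : J^∞)`, and `√` does not change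
the zero locus.
-/

namespace Ideal

variable {R : Type*} [CommRing R]

def saturation (I J : Ideal R) : Ideal R :=
  ⨆ m : ℕ, I.colon ((J ^ m : Ideal R) : Set R)

theorem mem_radical_saturation_of_mul_mem_radical {I J : Ideal R} (hJ : J.FG) {g : R}
    (h : ∀ j ∈ J, g * j ∈ I.radical) : g ∈ (I.saturation J).radical := by
  obtain ⟨t, ht⟩ := exists_pow_le_of_le_radical_of_fg (span_singleton_mul_le_iff.2 h)
    ((Submodule.fg_span_singleton g).mul hJ)
  refine ⟨t, mem_iSup_of_mem t (Submodule.mem_colon.2 fun j hj => ht ?_)⟩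
  rw [mul_pow]
  exact mul_mem_mul (pow_mem_pow (mem_span_singleton_self g) t) hj

end Ideal

namespace MvPolynomial

variable {k K σ : Type*} [Field k] [Field K] [Algebra k K]

theorem zeroLocus_radical (I : Ideal (MvPolynomial σ k)) :
    zeroLocus K I.radical = zeroLocus K I :=
  le_antisymm (zeroLocus_anti_mono Ideal.le_radical)
    ((zeroLocus_vanishingIdeal_le _).trans
      (zeroLocus_anti_mono (radical_le_vanishingIdeal_zeroLocus I)))

theorem saturation_le_vanishingIdeal_zeroLocus_diff (I J : Ideal (MvPolynomial σ k)) :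
    I.saturation J ≤ vanishingIdeal k (zeroLocus K I \ zeroLocus K J) := by
  refine iSup_le fun m f hf x ⟨hxI, hxJ⟩ => ?_
  obtain ⟨j, hjJ, hjx⟩ : ∃ j ∈ J, aeval x j ≠ 0 := by
    simpa [mem_zeroLocus_iff] using hxJ
  have hfj : aeval x f * aeval x j ^ m = 0 := by
    simpa using hxI _ (Submodule.mem_colon.1 hf _ (Ideal.pow_mem_pow hjJ m))
  exact (mul_eq_zero.1 hfj).resolve_right (pow_ne_zero m hjx)

theorem vanishingIdeal_zeroLocus_diff_le_radical_saturation [IsAlgClosed K] [Finite σ]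
    (I J : Ideal (MvPolynomial σ k)) :
    vanishingIdeal k (zeroLocus K I \ zeroLocus K J) ≤ (I.saturation J).radical := by
  intro g hg
  refine Ideal.mem_radical_saturation_of_mul_mem_radical (IsNoetherian.noetherian J) fun j hj => ?_
  rw [← vanishingIdeal_zeroLocus_eq_radical (K := K)]
  intro x hxI
  by_cases hxJ : x ∈ zeroLocus K J
  · simp [hxJ j hj]
  · simp [hg x ⟨hxI, hxJ⟩]

end MvPolynomial

/-- Over an algebraically closed field, the variety of the saturation `I : J^∞`
is the Zariski closure of `V(I) \ V(J)`. -/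
theorem zeroLocus_saturation {k : Type*} [Field k] [IsAlgClosed k] {n : ℕ}
    (I J : Ideal (MvPolynomial (Fin n) k)) :
    MvPolynomial.zeroLocus k (⨆ m : ℕ, I.colon ((J ^ m : Ideal (MvPolynomial (Fin n) k)) : Set (MvPolynomial (Fin n) k))) =
      MvPolynomial.zeroLocus k (MvPolynomial.vanishingIdeal k
        (MvPolynomial.zeroLocus k I \ MvPolynomial.zeroLocus k J)) := by
  change MvPolynomial.zeroLocus k (I.saturation J) = _
  refine le_antisymm ?_ (MvPolynomial.zeroLocus_anti_mono
    (MvPolynomial.saturation_le_vanishingIdeal_zeroLocus_diff I J))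
  rw [← MvPolynomial.zeroLocus_radical]
  exact MvPolynomial.zeroLocus_anti_mono
    (MvPolynomial.vanishingIdeal_zeroLocus_diff_le_radical_saturation I J)
end

section
/- Let m ≥ 4 and 0 < l < m be real numbers. The polytope P₁(m,l) = { x ∈ ℝ⁴ : x₁,x₂,x₃,x₄ ≥ 0, x₁+x₂+x₃+x₄ ≤ m, x₃+x₄ ≥ l } has exactly eight vertices, namely l·e₃, l·e₄, m·e₃, m·e₄, and (m−l)e_i + l·e_j for i ∈ {1,2}, j ∈ {3,4}. -/
private lemma combo_le {a b p q c : ℝ} (ha : 0 < a) (hb : 0 < b) (hab : a + b = 1)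
    (hp : p ≤ c) (hq : q ≤ c) (h : a * p + b * q = c) : p = c ∧ q = c := by
  have hac : a * c + b * c = c := by rw [← add_mul, hab, one_mul]
  have k1 : 0 ≤ a * (c - p) := mul_nonneg ha.le (by linarith)
  have k2 : 0 ≤ b * (c - q) := mul_nonneg hb.le (by linarith)
  have e : a * (c - p) + b * (c - q) = 0 := by nlinarith [hac, h]
  constructor
  · have h' : a * (c - p) = 0 := by linarith
    rcases mul_eq_zero.mp h' with h'' | h''
    · exact absurd h'' ha.ne'
    · linarith
  · have h' : b * (c - q) = 0 := by linarith
    rcases mul_eq_zero.mp h' with h'' | h''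
    · exact absurd h'' hb.ne'
    · linarith

private lemma combo_ge {a b p q c : ℝ} (ha : 0 < a) (hb : 0 < b) (hab : a + b = 1)
    (hp : c ≤ p) (hq : c ≤ q) (h : a * p + b * q = c) : p = c ∧ q = c := by
  have := combo_le (p := -p) (q := -q) (c := -c) ha hb hab (by linarith) (by linarith)
    (by ring_nf; ring_nf at h; linarith)
  constructor <;> linarith [this.1, this.2]


private lemma P1_forward (m l : ℝ) (hm : 4 ≤ m) (hl : 0 < l) (hlm : l < m)
    (x : Fin 4 → ℝ)
    (hx : x ∈ Set.extremePoints ℝ {x : Fin 4 → ℝ | (∀ i, 0 ≤ x i) ∧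
        x 0 + x 1 + x 2 + x 3 ≤ m ∧ l ≤ x 2 + x 3}) :
    x = ![0, 0, l, 0] ∨ x = ![0, 0, 0, l] ∨ x = ![0, 0, m, 0] ∨ x = ![0, 0, 0, m] ∨
    x = ![m - l, 0, l, 0] ∨ x = ![m - l, 0, 0, l] ∨ x = ![0, m - l, l, 0] ∨ x = ![0, m - l, 0, l] := by
  rw [mem_extremePoints] at hx
  obtain ⟨⟨hpos, hsm, hll⟩, hext⟩ := hx
  have pert : ∀ d : Fin 4 → ℝ, ((∀ i, 0 ≤ (x + d) i) ∧ (x+d) 0 + (x+d) 1 + (x+d) 2 + (x+d) 3 ≤ m ∧ l ≤ (x+d) 2 + (x+d) 3) →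
      ((∀ i, 0 ≤ (x - d) i) ∧ (x-d) 0 + (x-d) 1 + (x-d) 2 + (x-d) 3 ≤ m ∧ l ≤ (x-d) 2 + (x-d) 3) → d = 0 := by
    intro d h1 h2
    have hseg : x ∈ openSegment ℝ (x - d) (x + d) :=
      ⟨1/2, 1/2, by norm_num, by norm_num, by norm_num, by module⟩
    have h := (hext (x - d) h2 (x + d) h1 hseg).1
    exact sub_eq_self.mp h
  have h0 := hpos 0
  have h1 := hpos 1
  have h2 := hpos 2
  have h3 := hpos 3
  have F1 : x 0 = 0 ∨ x 1 = 0 := by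
    by_contra hc
    push_neg at hc
    have ha : 0 < x 0 := lt_of_le_of_ne h0 (Ne.symm hc.1)
    have hb : 0 < x 1 := lt_of_le_of_ne h1 (Ne.symm hc.2)
    set ε := min (x 0) (x 1) with hε
    have he1 : ε ≤ x 0 := min_le_left _ _
    have he2 : ε ≤ x 1 := min_le_right _ _
    have he0 : 0 < ε := lt_min ha hb
    have := pert ![ε, -ε, 0, 0]
      ⟨fun i => by fin_cases i <;> simp <;> linarith, by simp; linarith, by simp; linarith⟩
      ⟨fun i => by fin_cases i <;> simp <;> linarith, by simp; linarith, by simp; linarith⟩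
    have := congrFun this 0
    simp at this
    linarith
  have F2 : x 2 = 0 ∨ x 3 = 0 := by
    by_contra hc
    push_neg at hc
    have ha : 0 < x 2 := lt_of_le_of_ne h2 (Ne.symm hc.1)
    have hb : 0 < x 3 := lt_of_le_of_ne h3 (Ne.symm hc.2)
    set ε := min (x 2) (x 3) with hε
    have he1 : ε ≤ x 2 := min_le_left _ _
    have he2 : ε ≤ x 3 := min_le_right _ _
    have he0 : 0 < ε := lt_min ha hb
    have := pert ![0, 0, ε, -ε]
      ⟨fun i => by fin_cases i <;> simp <;> linarith, by simp; linarith, by simp; linarith⟩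
      ⟨fun i => by fin_cases i <;> simp <;> linarith, by simp; linarith, by simp; linarith⟩
    have := congrFun this 2
    simp at this
    linarith
  have F3 : x 0 = 0 ∨ x 0 + x 1 + x 2 + x 3 = m := by
    by_contra hc
    push_neg at hc
    have ha : 0 < x 0 := lt_of_le_of_ne h0 (Ne.symm hc.1)
    have hb : x 0 + x 1 + x 2 + x 3 < m := lt_of_le_of_ne hsm hc.2
    set ε := min (x 0) (m - (x 0 + x 1 + x 2 + x 3)) with hε
    have he1 : ε ≤ x 0 := min_le_left _ _
    have he2 : ε ≤ m - (x 0 + x 1 + x 2 + x 3) := min_le_right _ _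
    have he0 : 0 < ε := lt_min ha (by linarith)
    have := pert ![ε, 0, 0, 0]
      ⟨fun i => by fin_cases i <;> simp <;> linarith, by simp; linarith, by simp; linarith⟩
      ⟨fun i => by fin_cases i <;> simp <;> linarith, by simp; linarith, by simp; linarith⟩
    have := congrFun this 0
    simp at this
    linarith
  have F4 : x 1 = 0 ∨ x 0 + x 1 + x 2 + x 3 = m := by
    by_contra hc
    push_neg at hc
    have ha : 0 < x 1 := lt_of_le_of_ne h1 (Ne.symm hc.1)
    have hb : x 0 + x 1 + x 2 + x 3 < m := lt_of_le_of_ne hsm hc.2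
    set ε := min (x 1) (m - (x 0 + x 1 + x 2 + x 3)) with hε
    have he1 : ε ≤ x 1 := min_le_left _ _
    have he2 : ε ≤ m - (x 0 + x 1 + x 2 + x 3) := min_le_right _ _
    have he0 : 0 < ε := lt_min ha (by linarith)
    have := pert ![0, ε, 0, 0]
      ⟨fun i => by fin_cases i <;> simp <;> linarith, by simp; linarith, by simp; linarith⟩
      ⟨fun i => by fin_cases i <;> simp <;> linarith, by simp; linarith, by simp; linarith⟩
    have := congrFun this 1
    simp at this
    linarith
  have F5 : x 0 = 0 ∨ x 2 + x 3 = l := by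
    by_contra hc
    push_neg at hc
    have ha : 0 < x 0 := lt_of_le_of_ne h0 (Ne.symm hc.1)
    have hb : l < x 2 + x 3 := lt_of_le_of_ne hll (Ne.symm hc.2)
    set ε := min (x 0) (x 2 + x 3 - l) with hε
    have he1 : ε ≤ x 0 := min_le_left _ _
    have he2 : ε ≤ x 2 + x 3 - l := min_le_right _ _
    have he0 : 0 < ε := lt_min ha (by linarith)
    rcases F2 with hz | hz
    · have := pert ![ε, 0, 0, -ε]
        ⟨fun i => by fin_cases i <;> simp <;> linarith, by simp; linarith, by simp; linarith⟩
        ⟨fun i => by fin_cases i <;> simp <;> linarith, by simp; linarith, by simp; linarith⟩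
      have := congrFun this 0
      simp at this
      linarith
    · have := pert ![ε, 0, -ε, 0]
        ⟨fun i => by fin_cases i <;> simp <;> linarith, by simp; linarith, by simp; linarith⟩
        ⟨fun i => by fin_cases i <;> simp <;> linarith, by simp; linarith, by simp; linarith⟩
      have := congrFun this 0
      simp at this
      linarith
  have F6 : x 1 = 0 ∨ x 2 + x 3 = l := by
    by_contra hc
    push_neg at hc
    have ha : 0 < x 1 := lt_of_le_of_ne h1 (Ne.symm hc.1)
    have hb : l < x 2 + x 3 := lt_of_le_of_ne hll (Ne.symm hc.2)
    set ε := min (x 1) (x 2 + x 3 - l) with hε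
    have he1 : ε ≤ x 1 := min_le_left _ _
    have he2 : ε ≤ x 2 + x 3 - l := min_le_right _ _
    have he0 : 0 < ε := lt_min ha (by linarith)
    rcases F2 with hz | hz
    · have := pert ![0, ε, 0, -ε]
        ⟨fun i => by fin_cases i <;> simp <;> linarith, by simp; linarith, by simp; linarith⟩
        ⟨fun i => by fin_cases i <;> simp <;> linarith, by simp; linarith, by simp; linarith⟩
      have := congrFun this 1
      simp at this
      linarith
    · have := pert ![0, ε, -ε, 0]
        ⟨fun i => by fin_cases i <;> simp <;> linarith, by simp; linarith, by simp; linarith⟩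
        ⟨fun i => by fin_cases i <;> simp <;> linarith, by simp; linarith, by simp; linarith⟩
      have := congrFun this 1
      simp at this
      linarith
  have F7 : x 0 + x 1 + x 2 + x 3 = m ∨ x 2 + x 3 = l := by
    by_contra hc
    push_neg at hc
    have ha : x 0 + x 1 + x 2 + x 3 < m := lt_of_le_of_ne hsm hc.1
    have hb : l < x 2 + x 3 := lt_of_le_of_ne hll (Ne.symm hc.2)
    rcases F2 with hz | hz
    · -- x 2 = 0, so x 3 > l > 0
      set ε := min (x 2 + x 3 - l) (m - (x 0 + x 1 + x 2 + x 3)) with hε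
      have he1 : ε ≤ x 2 + x 3 - l := min_le_left _ _
      have he2 : ε ≤ m - (x 0 + x 1 + x 2 + x 3) := min_le_right _ _
      have he0 : 0 < ε := lt_min (by linarith) (by linarith)
      have := pert ![0, 0, 0, ε]
        ⟨fun i => by fin_cases i <;> simp <;> linarith, by simp; linarith, by simp; linarith⟩
        ⟨fun i => by fin_cases i <;> simp <;> linarith, by simp; linarith, by simp; linarith⟩
      have := congrFun this 3
      simp at this
      linarith
    · set ε := min (x 2 + x 3 - l) (m - (x 0 + x 1 + x 2 + x 3)) with hε
      have he1 : ε ≤ x 2 + x 3 - l := min_le_left _ _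
      have he2 : ε ≤ m - (x 0 + x 1 + x 2 + x 3) := min_le_right _ _
      have he0 : 0 < ε := lt_min (by linarith) (by linarith)
      have := pert ![0, 0, ε, 0]
        ⟨fun i => by fin_cases i <;> simp <;> linarith, by simp; linarith, by simp; linarith⟩
        ⟨fun i => by fin_cases i <;> simp <;> linarith, by simp; linarith, by simp; linarith⟩
      have := congrFun this 2
      simp at this
      linarith
  clear pert hext
  have fin : ∀ v : Fin 4 → ℝ, x 0 = v 0 → x 1 = v 1 → x 2 = v 2 → x 3 = v 3 → x = v := by
    intro v a b c d
    funext i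
    fin_cases i <;> assumption
  rcases F1 with e1 | e1
  · rcases F2 with e2 | e2
    · -- x0 = 0, x2 = 0
      rcases F6 with e6 | e6
      · rcases F7 with e7 | e7
        · -- x3 = m : p4
          exact Or.inr (Or.inr (Or.inr (Or.inl (fin _ (by simpa using e1) (by simpa using e6) (by simpa using e2) (by simp; linarith)))))
        · -- x3 = l : p2
          exact Or.inr (Or.inl (fin _ (by simpa using e1) (by simpa using e6) (by simpa using e2) (by simp; linarith)))
      · -- x3 = l, x1 from F4
        rcases F4 with e4 | e4
        · exact Or.inr (Or.inl (fin _ (by simpa using e1) (by simpa using e4) (by simpa using e2) (by simp; linarith)))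
        · -- x1 = m - l : p8
          exact Or.inr (Or.inr (Or.inr (Or.inr (Or.inr (Or.inr (Or.inr (fin _ (by simpa using e1) (by simp; linarith) (by simpa using e2) (by simp; linarith))))))))
    · -- x0 = 0, x3 = 0
      rcases F6 with e6 | e6
      · rcases F7 with e7 | e7
        · -- x2 = m : p3
          exact Or.inr (Or.inr (Or.inl (fin _ (by simpa using e1) (by simpa using e6) (by simp; linarith) (by simpa using e2))))
        · -- x2 = l : p1
          exact Or.inl (fin _ (by simpa using e1) (by simpa using e6) (by simp; linarith) (by simpa using e2))
      · rcases F4 with e4 | e4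
        · exact Or.inl (fin _ (by simpa using e1) (by simpa using e4) (by simp; linarith) (by simpa using e2))
        · -- x1 = m - l : p7
          exact Or.inr (Or.inr (Or.inr (Or.inr (Or.inr (Or.inr (Or.inl (fin _ (by simpa using e1) (by simp; linarith) (by simp; linarith) (by simpa using e2))))))))
  · rcases F2 with e2 | e2
    · -- x1 = 0, x2 = 0
      rcases F5 with e5 | e5
      · rcases F7 with e7 | e7
        · exact Or.inr (Or.inr (Or.inr (Or.inl (fin _ (by simpa using e5) (by simpa using e1) (by simpa using e2) (by simp; linarith)))))
        · exact Or.inr (Or.inl (fin _ (by simpa using e5) (by simpa using e1) (by simpa using e2) (by simp; linarith)))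
      · rcases F3 with e3 | e3
        · exact Or.inr (Or.inl (fin _ (by simpa using e3) (by simpa using e1) (by simpa using e2) (by simp; linarith)))
        · -- x0 = m - l : p6
          exact Or.inr (Or.inr (Or.inr (Or.inr (Or.inr (Or.inl (fin _ (by simp; linarith) (by simpa using e1) (by simpa using e2) (by simp; linarith)))))))
    · -- x1 = 0, x3 = 0
      rcases F5 with e5 | e5
      · rcases F7 with e7 | e7
        · exact Or.inr (Or.inr (Or.inl (fin _ (by simpa using e5) (by simpa using e1) (by simp; linarith) (by simpa using e2))))
        · exact Or.inl (fin _ (by simpa using e5) (by simpa using e1) (by simp; linarith) (by simpa using e2))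
      · rcases F3 with e3 | e3
        · exact Or.inl (fin _ (by simpa using e3) (by simpa using e1) (by simp; linarith) (by simpa using e2))
        · -- x0 = m - l : p5
          exact Or.inr (Or.inr (Or.inr (Or.inr (Or.inl (fin _ (by simp; linarith) (by simpa using e1) (by simp; linarith) (by simpa using e2))))))

private lemma P1_backward (m l : ℝ) (hm : 4 ≤ m) (hl : 0 < l) (hlm : l < m)
    (x : Fin 4 → ℝ)
    (hx : x = ![0, 0, l, 0] ∨ x = ![0, 0, 0, l] ∨ x = ![0, 0, m, 0] ∨ x = ![0, 0, 0, m] ∨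
      x = ![m - l, 0, l, 0] ∨ x = ![m - l, 0, 0, l] ∨ x = ![0, m - l, l, 0] ∨ x = ![0, m - l, 0, l]) :
    x ∈ Set.extremePoints ℝ {x : Fin 4 → ℝ | (∀ i, 0 ≤ x i) ∧
        x 0 + x 1 + x 2 + x 3 ≤ m ∧ l ≤ x 2 + x 3} := by
  rw [mem_extremePoints]
  constructor
  · refine ⟨fun i => ?_, ?_, ?_⟩ <;>
      rcases hx with rfl|rfl|rfl|rfl|rfl|rfl|rfl|rfl <;>
      first
        | (fin_cases i <;> simp <;> linarith)
        | (simp <;> linarith)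
  · rintro y ⟨hy0, hy1, hy2⟩ z ⟨hz0, hz1, hz2⟩ ⟨a, b, ha, hb, hab, hs⟩
    have hc : ∀ i, a * y i + b * z i = x i := fun i => by
      have := congrFun hs i; simpa using this
    -- helper facts per coordinate pattern
    have zero_co : ∀ i : Fin 4, x i = 0 → y i = 0 ∧ z i = 0 := fun i hi =>
      combo_ge ha hb hab (hy0 i) (hz0 i) (by rw [hc i, hi])
    have sum_co : x 0 + x 1 + x 2 + x 3 = m →
        (y 0 + y 1 + y 2 + y 3 = m) ∧ (z 0 + z 1 + z 2 + z 3 = m) := fun hxm =>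
      combo_le ha hb hab hy1 hz1 (by
        have := hc 0; have := hc 1; have := hc 2; have := hc 3; nlinarith [hc 0, hc 1, hc 2, hc 3])
    have lsum_co : x 2 + x 3 = l →
        (y 2 + y 3 = l) ∧ (z 2 + z 3 = l) := fun hxl =>
      combo_ge ha hb hab hy2 hz2 (by nlinarith [hc 2, hc 3])
    have fin : ∀ v w : Fin 4 → ℝ, v 0 = w 0 → v 1 = w 1 → v 2 = w 2 → v 3 = w 3 → v = w := by
      intro v w a b c d; funext i; fin_cases i <;> assumption
    rcases hx with rfl|rfl|rfl|rfl|rfl|rfl|rfl|rfl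
    · -- ![0,0,l,0] : coords 0,1,3 zero, l-constraint tight
      obtain ⟨y0, z0⟩ := zero_co 0 (by simp)
      obtain ⟨ya, za⟩ := zero_co 1 (by simp)
      obtain ⟨yb, zb⟩ := zero_co 3 (by simp)
      obtain ⟨yl, zl⟩ := lsum_co (by simp)
      constructor <;> apply fin <;> simp <;> linarith
    · obtain ⟨y0, z0⟩ := zero_co 0 (by simp)
      obtain ⟨ya, za⟩ := zero_co 1 (by simp)
      obtain ⟨yb, zb⟩ := zero_co 2 (by simp)
      obtain ⟨yl, zl⟩ := lsum_co (by simp)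
      constructor <;> apply fin <;> simp <;> linarith
    · obtain ⟨y0, z0⟩ := zero_co 0 (by simp)
      obtain ⟨ya, za⟩ := zero_co 1 (by simp)
      obtain ⟨yb, zb⟩ := zero_co 3 (by simp)
      obtain ⟨ym, zm⟩ := sum_co (by simp)
      constructor <;> apply fin <;> simp <;> linarith
    · obtain ⟨y0, z0⟩ := zero_co 0 (by simp)
      obtain ⟨ya, za⟩ := zero_co 1 (by simp)
      obtain ⟨yb, zb⟩ := zero_co 2 (by simp)
      obtain ⟨ym, zm⟩ := sum_co (by simp)
      constructor <;> apply fin <;> simp <;> linarith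
    · -- ![m-l,0,l,0]
      obtain ⟨ya, za⟩ := zero_co 1 (by simp)
      obtain ⟨yb, zb⟩ := zero_co 3 (by simp)
      obtain ⟨yl, zl⟩ := lsum_co (by simp)
      obtain ⟨ym, zm⟩ := sum_co (by simp)
      constructor <;> apply fin <;> simp <;> linarith
    · obtain ⟨ya, za⟩ := zero_co 1 (by simp)
      obtain ⟨yb, zb⟩ := zero_co 2 (by simp)
      obtain ⟨yl, zl⟩ := lsum_co (by simp)
      obtain ⟨ym, zm⟩ := sum_co (by simp)
      constructor <;> apply fin <;> simp <;> linarith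
    · obtain ⟨ya, za⟩ := zero_co 0 (by simp)
      obtain ⟨yb, zb⟩ := zero_co 3 (by simp)
      obtain ⟨yl, zl⟩ := lsum_co (by simp)
      obtain ⟨ym, zm⟩ := sum_co (by simp)
      constructor <;> apply fin <;> simp <;> linarith
    · obtain ⟨ya, za⟩ := zero_co 0 (by simp)
      obtain ⟨yb, zb⟩ := zero_co 2 (by simp)
      obtain ⟨yl, zl⟩ := lsum_co (by simp)
      obtain ⟨ym, zm⟩ := sum_co (by simp)
      constructor <;> apply fin <;> simp <;> linarith

private lemma P1_ncard (m l : ℝ) (hm : 4 ≤ m) (hl : 0 < l) (hlm : l < m) :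
    ({![0, 0, l, 0], ![0, 0, 0, l], ![0, 0, m, 0], ![0, 0, 0, m],
      ![m - l, 0, l, 0], ![m - l, 0, 0, l], ![0, m - l, l, 0], ![0, m - l, 0, l]} :
      Set (Fin 4 → ℝ)).ncard = 8 := by
  rw [Set.ncard_insert_of_notMem, Set.ncard_insert_of_notMem,
      Set.ncard_insert_of_notMem, Set.ncard_insert_of_notMem,
      Set.ncard_insert_of_notMem, Set.ncard_insert_of_notMem,
      Set.ncard_insert_of_notMem, Set.ncard_singleton]
  all_goals simp only [Set.mem_insert_iff, Set.mem_singleton_iff, not_or]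
  all_goals repeat' apply And.intro
  all_goals try (intro h; have h0 := congrFun h 0; have h1 := congrFun h 1; have h2 := congrFun h 2; have h3 := congrFun h 3; simp at h0 h1 h2 h3 <;> linarith)
  all_goals norm_num


/-- The polytope `P₁(m, l) = {x ∈ ℝ⁴ : x ≥ 0, Σxᵢ ≤ m, x₃ + x₄ ≥ l}` (for
`4 ≤ m`, `0 < l < m`) has exactly eight vertices: `l·e₃`, `l·e₄`, `m·e₃`, `m·e₄`
and `(m - l)·eᵢ + l·eⱼ` for `i ∈ {1,2}`, `j ∈ {3,4}`. -/
theorem vertices_P1 (m l : ℝ) (hm : 4 ≤ m) (hl : 0 < l) (hlm : l < m) :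
    Set.extremePoints ℝ {x : Fin 4 → ℝ | (∀ i, 0 ≤ x i) ∧
        x 0 + x 1 + x 2 + x 3 ≤ m ∧ l ≤ x 2 + x 3} =
      {![0, 0, l, 0], ![0, 0, 0, l], ![0, 0, m, 0], ![0, 0, 0, m],
        ![m - l, 0, l, 0], ![m - l, 0, 0, l], ![0, m - l, l, 0], ![0, m - l, 0, l]} ∧
    (Set.extremePoints ℝ {x : Fin 4 → ℝ | (∀ i, 0 ≤ x i) ∧
        x 0 + x 1 + x 2 + x 3 ≤ m ∧ l ≤ x 2 + x 3}).ncard = 8 := by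
  have key : Set.extremePoints ℝ {x : Fin 4 → ℝ | (∀ i, 0 ≤ x i) ∧
        x 0 + x 1 + x 2 + x 3 ≤ m ∧ l ≤ x 2 + x 3} =
      {![0, 0, l, 0], ![0, 0, 0, l], ![0, 0, m, 0], ![0, 0, 0, m],
        ![m - l, 0, l, 0], ![m - l, 0, 0, l], ![0, m - l, l, 0], ![0, m - l, 0, l]} := by
    ext x
    simp only [Set.mem_insert_iff, Set.mem_singleton_iff]
    constructor
    · exact P1_forward m l hm hl hlm x
    · exact P1_backward m l hm hl hlm x
  exact ⟨key, by rw [key]; exact P1_ncard m l hm hl hlm⟩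
end

section
/- Let m ≥ 4 and 0 < l < m. The 4-dimensional Lebesgue volume of the polytope P₁(m,l) = { x ∈ ℝ⁴ : x₁,x₂,x₃,x₄ ≥ 0, x₁+x₂+x₃+x₄ ≤ m, x₃+x₄ ≥ l } equals (m−l)³(m+3l)/24. -/
/-!
Split `x ∈ ℝ⁴` into the pairs `(x₁, x₂)` and `(x₃, x₄)`. On the quadrant `ℝ≥0²` the sum of the
two coordinates has density `s ↦ s`. The slice of `P₁` over a pair `(x₃, x₄)` with
`x₃ + x₄ = t ∈ [l, m]` is a triangle of area `(m - t)² / 2`, so `vol P₁ = ∫ₗᵐ t (m - t)² / 2 dt`.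
An antiderivative of the integrand is `-(m - t)³ (m + 3t) / 24`, which vanishes at `t = m`.
-/

open MeasureTheory Set
open scoped ENNReal

lemma lintegral_Icc_ofReal_eq_intervalIntegral {f : ℝ → ℝ} {a b : ℝ} (hab : a ≤ b)
    (hf : ContinuousOn f (Icc a b)) (hf₀ : ∀ x ∈ Icc a b, 0 ≤ f x) :
    ∫⁻ x in Icc a b, ENNReal.ofReal (f x) = ENNReal.ofReal (∫ x in a..b, f x) := by
  rw [intervalIntegral.integral_of_le hab, ← integral_Icc_eq_integral_Ioc,
    ofReal_integral_eq_lintegral_ofReal hf.integrableOn_Icc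
      ((ae_restrict_iff' measurableSet_Icc).2 (Filter.Eventually.of_forall hf₀))]

lemma lintegral_quadrant_comp_add {g : ℝ → ℝ≥0∞} (hg : Measurable g) :
    ∫⁻ p in Ici (0 : ℝ) ×ˢ Ici 0, g (p.1 + p.2) = ∫⁻ s, ENNReal.ofReal s * g s := by
  -- the shear `(a, b) ↦ (a, a + b)` preserves volume and maps the quadrant onto `{0 ≤ a ≤ s}`
  set F : ℝ × ℝ → ℝ≥0∞ := {z | 0 ≤ z.1 ∧ z.1 ≤ z.2}.indicator fun z => g z.2
  have hF : Measurable F := (hg.comp measurable_snd).indicator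
    ((measurableSet_le measurable_const measurable_fst).inter
      (measurableSet_le measurable_fst measurable_snd))
  have hshear : (Ici 0 ×ˢ Ici 0).indicator (fun p : ℝ × ℝ => g (p.1 + p.2)) =
      fun z => F (z.1, z.1 + z.2) := by
    ext z
    simp only [F, indicator_apply, mem_prod, mem_Ici, mem_ofPred_eq, le_add_iff_nonneg_right]
  calc ∫⁻ p in Ici 0 ×ˢ Ici 0, g (p.1 + p.2)
      = ∫⁻ z : ℝ × ℝ, F (z.1, z.1 + z.2) := by
        rw [← lintegral_indicator (measurableSet_Ici.prod measurableSet_Ici), hshear]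
    _ = ∫⁻ z, F z := by
        rw [Measure.volume_eq_prod]
        exact (measurePreserving_prod_add volume volume).lintegral_comp hF
    _ = ∫⁻ s, ∫⁻ a, F (a, s) := by
        rw [Measure.volume_eq_prod, lintegral_prod_symm _ hF.aemeasurable]
    _ = ∫⁻ s, ENNReal.ofReal s * g s := by
        refine lintegral_congr fun s => ?_
        have hslice : (fun a => F (a, s)) = (Icc 0 s).indicator fun _ => g s := by
          ext a; simp [F, indicator_apply]
        rw [hslice, lintegral_indicator_const measurableSet_Icc, Real.volume_Icc, sub_zero,
          mul_comm]

lemma volume_triangle {s : ℝ} (hs : 0 ≤ s) :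
    volume {p : ℝ × ℝ | 0 ≤ p.1 ∧ 0 ≤ p.2 ∧ p.1 + p.2 ≤ s} = ENNReal.ofReal (s ^ 2 / 2) := by
  have hind : {p : ℝ × ℝ | 0 ≤ p.1 ∧ 0 ≤ p.2 ∧ p.1 + p.2 ≤ s}.indicator (1 : ℝ × ℝ → ℝ≥0∞) =
      (Ici 0 ×ˢ Ici 0).indicator fun p : ℝ × ℝ => (Iic s).indicator 1 (p.1 + p.2) := by
    ext p
    simp only [indicator_apply, mem_prod, mem_Ici, mem_Iic, mem_ofPred_eq]
    split_ifs <;> tauto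
  have hdensity : (fun u => ENNReal.ofReal u * (Iic s).indicator 1 u) =
      (Icc 0 s).indicator fun u => ENNReal.ofReal u := by
    ext u
    by_cases hu : 0 ≤ u
    · by_cases hus : u ≤ s <;> simp [hu, hus]
    · simp [indicator_apply, hu, ENNReal.ofReal_of_nonpos (not_le.1 hu).le]
  rw [← lintegral_indicator_one (by measurability), hind,
    lintegral_indicator (measurableSet_Ici.prod measurableSet_Ici),
    lintegral_quadrant_comp_add (measurable_one.indicator measurableSet_Iic), hdensity,
    lintegral_indicator measurableSet_Icc,
    lintegral_Icc_ofReal_eq_intervalIntegral (f := fun u => u) hs continuousOn_id fun u hu => hu.1,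
    integral_id]
  congr 1
  ring

lemma integral_mul_sub_sq_div_two (l m : ℝ) :
    ∫ t in l..m, t * (m - t) ^ 2 / 2 = (m - l) ^ 3 * (m + 3 * l) / 24 := by
  have hderiv : ∀ t, HasDerivAt (fun t => -(m - t) ^ 3 * (m + 3 * t) / 24)
      (t * (m - t) ^ 2 / 2) t := fun t =>
    ((((hasDerivAt_id t).const_sub m).fun_pow 3).fun_neg.fun_mul
      (((hasDerivAt_id t).const_mul 3).const_add m)).div_const 24 |>.congr_deriv (by
        simp only [id]; ring)
  rw [intervalIntegral.integral_eq_sub_of_hasDerivAt (fun t _ => hderiv t)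
    (by apply Continuous.intervalIntegrable; fun_prop)]
  ring

lemma volume_P1_prod {l m : ℝ} (hl : 0 < l) (hlm : l < m) :
    volume {z : (ℝ × ℝ) × (ℝ × ℝ) | 0 ≤ z.1.1 ∧ 0 ≤ z.1.2 ∧ 0 ≤ z.2.1 ∧ 0 ≤ z.2.2 ∧
      z.1.1 + z.1.2 + (z.2.1 + z.2.2) ≤ m ∧ l ≤ z.2.1 + z.2.2} =
      ENNReal.ofReal ((m - l) ^ 3 * (m + 3 * l) / 24) := by
  set P := {z : (ℝ × ℝ) × (ℝ × ℝ) | 0 ≤ z.1.1 ∧ 0 ≤ z.1.2 ∧ 0 ≤ z.2.1 ∧ 0 ≤ z.2.2 ∧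
      z.1.1 + z.1.2 + (z.2.1 + z.2.2) ≤ m ∧ l ≤ z.2.1 + z.2.2}
  set area : ℝ → ℝ≥0∞ := (Icc l m).indicator fun t => ENNReal.ofReal ((m - t) ^ 2 / 2)
    with harea
  have hslice : ∀ q : ℝ × ℝ, volume ((fun p => (p, q)) ⁻¹' P) =
      (Ici 0 ×ˢ Ici 0).indicator (fun q => area (q.1 + q.2)) q := by
    intro q
    by_cases hq : (0 ≤ q.1 ∧ 0 ≤ q.2) ∧ q.1 + q.2 ∈ Icc l m
    · rw [indicator_of_mem (show q ∈ Ici 0 ×ˢ Ici 0 from hq.1), harea, indicator_of_mem hq.2,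
        ← volume_triangle (sub_nonneg.2 hq.2.2)]
      congr 1 with p
      simp only [P, mem_preimage, mem_ofPred_eq]
      constructor
      · rintro ⟨hp₁, hp₂, -, -, hsum, -⟩
        exact ⟨hp₁, hp₂, by linarith⟩
      · rintro ⟨hp₁, hp₂, hsum⟩
        exact ⟨hp₁, hp₂, hq.1.1, hq.1.2, by linarith, hq.2.1⟩
    · have hempty : (fun p => (p, q)) ⁻¹' P = ∅ := by
        ext p
        simp only [P, mem_preimage, mem_ofPred_eq, mem_empty_iff_false, iff_false]
        rintro ⟨hp₁, hp₂, hq₁, hq₂, hsum, hlq⟩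
        exact hq ⟨⟨hq₁, hq₂⟩, hlq, by linarith⟩
      rw [hempty, measure_empty, eq_comm, indicator_apply_eq_zero]
      exact fun hQ => indicator_of_notMem (fun ht => hq ⟨hQ, ht⟩) _
  have hdensity : (fun t => ENNReal.ofReal t * area t) =
      (Icc l m).indicator fun t => ENNReal.ofReal (t * (m - t) ^ 2 / 2) := by
    ext t
    by_cases ht : t ∈ Icc l m
    · simp [area, ht, mul_div_assoc, ENNReal.ofReal_mul (hl.le.trans ht.1)]
    · simp [area, ht]
  rw [Measure.volume_eq_prod, Measure.prod_apply_symm (by measurability), lintegral_congr hslice,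
    lintegral_indicator (measurableSet_Ici.prod measurableSet_Ici),
    lintegral_quadrant_comp_add (Measurable.indicator (by fun_prop) measurableSet_Icc), hdensity,
    lintegral_indicator measurableSet_Icc,
    lintegral_Icc_ofReal_eq_intervalIntegral hlm.le (by fun_prop)
      (fun t ht => by have := hl.trans_le ht.1; positivity), integral_mul_sub_sq_div_two]

lemma volume_preserving_fin_four_to_pairs (α : Type*) [MeasureSpace α]
    [SigmaFinite (volume : Measure α)] :
    MeasurePreserving (fun x : Fin 4 → α => ((x 0, x 1), (x 2, x 3))) :=
  ((volume_preserving_finTwoArrow α).prod (volume_preserving_finTwoArrow α)).comp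
    ((volume_measurePreserving_sumPiEquivProdPi fun _ : Fin 2 ⊕ Fin 2 => α).comp
      (volume_measurePreserving_piCongrLeft (fun _ => α) finSumFinEquiv).symm)

theorem volume_P1_general (m l : ℝ) (hl : 0 < l) (hlm : l < m) :
    MeasureTheory.volume {x : Fin 4 → ℝ | (∀ i, 0 ≤ x i) ∧
        x 0 + x 1 + x 2 + x 3 ≤ m ∧ l ≤ x 2 + x 3} =
      ENNReal.ofReal ((m - l) ^ 3 * (m + 3 * l) / 24) := by
  have hP : {x : Fin 4 → ℝ | (∀ i, 0 ≤ x i) ∧ x 0 + x 1 + x 2 + x 3 ≤ m ∧ l ≤ x 2 + x 3} =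
      (fun x => ((x 0, x 1), (x 2, x 3))) ⁻¹'
        {z : (ℝ × ℝ) × (ℝ × ℝ) | 0 ≤ z.1.1 ∧ 0 ≤ z.1.2 ∧ 0 ≤ z.2.1 ∧ 0 ≤ z.2.2 ∧
          z.1.1 + z.1.2 + (z.2.1 + z.2.2) ≤ m ∧ l ≤ z.2.1 + z.2.2} := by
    ext x
    simp only [mem_ofPred_eq, mem_preimage, Fin.forall_fin_succ, IsEmpty.forall_iff, and_true,
      Fin.succ_zero_eq_one, Fin.succ_one_eq_two, and_assoc, add_assoc]
    rfl
  rw [hP, (volume_preserving_fin_four_to_pairs ℝ).measure_preimage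
    (by measurability : MeasurableSet _).nullMeasurableSet, volume_P1_prod hl hlm]

/-- The volume of `P₁(m, l) = {x ∈ ℝ⁴ : x ≥ 0, Σxᵢ ≤ m, x₃ + x₄ ≥ l}`
is `(m - l)³(m + 3l)/24`. -/
theorem volume_P1 (m l : ℝ) (hm : 4 ≤ m) (hl : 0 < l) (hlm : l < m) :
    MeasureTheory.volume {x : Fin 4 → ℝ | (∀ i, 0 ≤ x i) ∧
        x 0 + x 1 + x 2 + x 3 ≤ m ∧ l ≤ x 2 + x 3} =
      ENNReal.ofReal ((m - l) ^ 3 * (m + 3 * l) / 24) :=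
  volume_P1_general m l hl hlm
end

section
/- Let 0 < l < k < m with m ≥ 4. The 4-dimensional Lebesgue volume of the polytope P₂(m,l,k) = { x ∈ ℝ⁴ : x₁,x₂,x₃,x₄ ≥ 0, x₁+x₂+x₃+x₄ ≤ m, l ≤ x₃+x₄ ≤ k } equals ((m−l)³(m+3l) − (m−k)³(m+3k))/24. -/
open MeasureTheory Set

lemma lint_helper (a b : ℝ) (hab : a ≤ b) (f : ℝ → ℝ) (hf : Continuous f)
    (h0 : ∀ x ∈ Set.Icc a b, 0 ≤ f x) :
    ∫⁻ x in Set.Icc a b, ENNReal.ofReal (f x) = ENNReal.ofReal (∫ x in a..b, f x) := by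
  rw [intervalIntegral.integral_of_le hab, ← MeasureTheory.integral_Icc_eq_integral_Ioc,
    ← MeasureTheory.ofReal_integral_eq_lintegral_ofReal
      (hf.continuousOn.integrableOn_Icc)
      ((ae_restrict_iff' measurableSet_Icc).2 (ae_of_all _ h0))]

lemma tri (c : ℝ) (hc : 0 ≤ c) :
    volume {r : ℝ × ℝ | 0 ≤ r.1 ∧ 0 ≤ r.2 ∧ r.1 + r.2 ≤ c} = ENNReal.ofReal (c ^ 2 / 2) := by
  have hmeas : MeasurableSet {r : ℝ × ℝ | 0 ≤ r.1 ∧ 0 ≤ r.2 ∧ r.1 + r.2 ≤ c} := by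
    apply IsClosed.measurableSet
    refine IsClosed.inter (isClosed_le continuous_const continuous_fst) ?_
    exact IsClosed.inter (isClosed_le continuous_const continuous_snd)
      (isClosed_le (continuous_fst.add continuous_snd) continuous_const)
  rw [Measure.volume_eq_prod, Measure.prod_apply hmeas]
  have key : ∀ x : ℝ, volume (Prod.mk x ⁻¹' {r : ℝ × ℝ | 0 ≤ r.1 ∧ 0 ≤ r.2 ∧ r.1 + r.2 ≤ c}) =
      Set.indicator (Icc 0 c) (fun x => ENNReal.ofReal (c - x)) x := by
    intro x
    by_cases hx : x ∈ Icc 0 c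
    · have : Prod.mk x ⁻¹' {r : ℝ × ℝ | 0 ≤ r.1 ∧ 0 ≤ r.2 ∧ r.1 + r.2 ≤ c} = Icc 0 (c - x) := by
        ext b; simp only [mem_preimage, mem_setOf_eq, mem_Icc]
        constructor
        · rintro ⟨-, h1, h2⟩; exact ⟨h1, by linarith⟩
        · rintro ⟨h1, h2⟩; exact ⟨hx.1, h1, by linarith⟩
      rw [this, Real.volume_Icc, indicator_of_mem hx]
      norm_num
    · have : Prod.mk x ⁻¹' {r : ℝ × ℝ | 0 ≤ r.1 ∧ 0 ≤ r.2 ∧ r.1 + r.2 ≤ c} = ∅ := by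
        ext b; simp only [mem_preimage, mem_setOf_eq, mem_empty_iff_false, iff_false]
        rintro ⟨h1, h2, h3⟩
        exact hx ⟨h1, by linarith⟩
      rw [this, indicator_of_notMem hx, measure_empty]
  rw [lintegral_congr key, lintegral_indicator measurableSet_Icc,
    lint_helper 0 c hc _ (by continuity) (fun x hx => by linarith [hx.2])]
  congr 1
  rw [intervalIntegral.integral_sub intervalIntegrable_const intervalIntegral.intervalIntegrable_id]
  simp [integral_id]
  ring

lemma volT (m l k : ℝ) (hm : 4 ≤ m) (hl : 0 < l) (hlk : l < k) (hkm : k < m) :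
    volume {p : ℝ × ℝ × ℝ × ℝ | 0 ≤ p.2.2.1 ∧ 0 ≤ p.2.2.2 ∧ 0 ≤ p.1 ∧ 0 ≤ p.2.1 ∧
        p.2.2.1 + p.2.2.2 + p.1 + p.2.1 ≤ m ∧ l ≤ p.1 + p.2.1 ∧ p.1 + p.2.1 ≤ k} =
      ENNReal.ofReal (((m - l) ^ 3 * (m + 3 * l) - (m - k) ^ 3 * (m + 3 * k)) / 24) := by
  set T : Set (ℝ × ℝ × ℝ × ℝ) := {p | 0 ≤ p.2.2.1 ∧ 0 ≤ p.2.2.2 ∧ 0 ≤ p.1 ∧ 0 ≤ p.2.1 ∧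
        p.2.2.1 + p.2.2.2 + p.1 + p.2.1 ≤ m ∧ l ≤ p.1 + p.2.1 ∧ p.1 + p.2.1 ≤ k} with hT_def
  have hTmeas : MeasurableSet T := by
    apply IsClosed.measurableSet
    rw [hT_def]
    simp only [Set.setOf_and]
    repeat' apply IsClosed.inter
    all_goals exact isClosed_le (by fun_prop) (by fun_prop)
  set F : ℝ → ℝ := fun u => ((m - max l u) ^ 3 - (m - k) ^ 3) / 6 with hF_def
  have contF : Continuous F := by
    apply Continuous.div_const
    apply Continuous.sub _ continuous_const
    exact (continuous_const.sub (continuous_const.max continuous_id)).pow 3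
  have nnF : ∀ u ∈ Icc (0:ℝ) k, 0 ≤ F u := by
    intro u hu
    have h1 : max l u ≤ k := max_le hlk.le hu.2
    have h2 : (m - k) ^ 3 ≤ (m - max l u) ^ 3 :=
      pow_le_pow_left₀ (by linarith) (by linarith) 3
    rw [hF_def]
    simp only
    linarith
  rw [Measure.volume_eq_prod, Measure.prod_apply hTmeas]
  have key : ∀ u, volume (Prod.mk u ⁻¹' T) =
      Set.indicator (Icc 0 k) (fun u => ENNReal.ofReal (F u)) u := by
    intro u
    by_cases hu : u ∈ Icc (0:ℝ) k
    · rw [indicator_of_mem hu]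
      have hslice : MeasurableSet (Prod.mk u ⁻¹' T) := hTmeas.preimage measurable_prodMk_left
      rw [Measure.volume_eq_prod, Measure.prod_apply hslice]
      have key2 : ∀ v, volume (Prod.mk v ⁻¹' (Prod.mk u ⁻¹' T)) =
          Set.indicator (Icc (max 0 (l - u)) (k - u))
            (fun v => ENNReal.ofReal ((m - u - v) ^ 2 / 2)) v := by
        intro v
        by_cases hv : v ∈ Icc (max 0 (l - u)) (k - u)
        · rw [indicator_of_mem hv]
          obtain ⟨hv1, hv2⟩ := hv
          have hv0 : 0 ≤ v := le_trans (le_max_left _ _) hv1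
          have hvl : l - u ≤ v := le_trans (le_max_right _ _) hv1
          have hset : Prod.mk v ⁻¹' (Prod.mk u ⁻¹' T) =
              {r : ℝ × ℝ | 0 ≤ r.1 ∧ 0 ≤ r.2 ∧ r.1 + r.2 ≤ m - u - v} := by
            ext r
            simp only [hT_def, mem_preimage, mem_setOf_eq]
            constructor
            · rintro ⟨h1, h2, h3, h4, h5, h6, h7⟩; exact ⟨h1, h2, by linarith⟩
            · rintro ⟨h1, h2, h3⟩
              exact ⟨h1, h2, hu.1, hv0, by linarith, by linarith, by linarith⟩
          rw [hset, tri _ (by linarith)]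
        · rw [indicator_of_notMem hv]
          have hset : Prod.mk v ⁻¹' (Prod.mk u ⁻¹' T) = ∅ := by
            ext r
            simp only [hT_def, mem_preimage, mem_setOf_eq, mem_empty_iff_false, iff_false]
            rintro ⟨h1, h2, h3, h4, h5, h6, h7⟩
            exact hv ⟨max_le (by linarith) (by linarith), by linarith⟩
          rw [hset, measure_empty]
      rw [lintegral_congr key2, lintegral_indicator measurableSet_Icc]
      have hab : max 0 (l - u) ≤ k - u := max_le (by linarith [hu.2]) (by linarith)
      rw [lint_helper _ _ hab _ (by fun_prop) (fun v _ => by positivity)]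
      congr 1
      have e1 : u + max 0 (l - u) = max l u := by
        rcases le_total l u with h | h
        · rw [max_eq_left (by linarith), max_eq_right h]; ring
        · rw [max_eq_right (by linarith), max_eq_left h]; ring
      calc ∫ v in (max 0 (l - u))..(k - u), (m - u - v) ^ 2 / 2
          = ∫ v in (max 0 (l - u))..(k - u), (fun s => (m - s) ^ 2 / 2) (u + v) := by
            apply intervalIntegral.integral_congr; intro v _; simp only; ring_nf
        _ = ∫ s in (u + max 0 (l - u))..(u + (k - u)), (m - s) ^ 2 / 2 :=
            intervalIntegral.integral_comp_add_left (fun s => (m - s) ^ 2 / 2) u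
        _ = ∫ s in (max l u)..k, (m - s) ^ 2 / 2 := by rw [e1]; norm_num
        _ = ∫ t in (m - k)..(m - max l u), t ^ 2 / 2 :=
            intervalIntegral.integral_comp_sub_left (fun t => t ^ 2 / 2) m
        _ = F u := by
            rw [intervalIntegral.integral_div, integral_pow, hF_def]
            ring_nf
    · rw [indicator_of_notMem hu]
      have hset : Prod.mk u ⁻¹' T = ∅ := by
        ext q
        simp only [hT_def, mem_preimage, mem_setOf_eq, mem_empty_iff_false, iff_false]
        rintro ⟨h1, h2, h3, h4, h5, h6, h7⟩
        exact hu ⟨h3, by linarith⟩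
      rw [hset, measure_empty]
  rw [lintegral_congr key, lintegral_indicator measurableSet_Icc,
    lint_helper 0 k (by linarith) F contF nnF]
  congr 1
  have hsplit : ∫ u in (0:ℝ)..k, F u = (∫ u in (0:ℝ)..l, F u) + ∫ u in l..k, F u :=
    (intervalIntegral.integral_add_adjacent_intervals (contF.intervalIntegrable _ _)
      (contF.intervalIntegrable _ _)).symm
  have hI1 : ∫ u in (0:ℝ)..l, F u = l * (((m - l) ^ 3 - (m - k) ^ 3) / 6) := by
    rw [intervalIntegral.integral_congr
      (g := fun _ => ((m - l) ^ 3 - (m - k) ^ 3) / 6) ?_]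
    · rw [intervalIntegral.integral_const]; simp [smul_eq_mul]
    · intro u hu
      rw [Set.uIcc_of_le hl.le] at hu
      rw [hF_def]; simp only [max_eq_left hu.2]
  have hI2 : ∫ u in l..k, F u =
      ((m - l) ^ 4 - (m - k) ^ 4) / 24 - (k - l) * ((m - k) ^ 3 / 6) := by
    rw [intervalIntegral.integral_congr
      (g := fun u => ((m - u) ^ 3 - (m - k) ^ 3) / 6) ?_]
    · have : ∀ u : ℝ, ((m - u) ^ 3 - (m - k) ^ 3) / 6 =
          (fun t => t ^ 3) (m - u) / 6 - (m - k) ^ 3 / 6 := by intro u; simp only; ring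
      simp_rw [this]
      have h3 : (∫ x in l..k, ((m:ℝ) - x) ^ 3) = ∫ t in (m - k)..(m - l), t ^ 3 :=
        intervalIntegral.integral_comp_sub_left (fun t => t ^ 3) m
      rw [intervalIntegral.integral_sub (by apply Continuous.intervalIntegrable; fun_prop)
        intervalIntegrable_const, intervalIntegral.integral_const,
        intervalIntegral.integral_div, h3, integral_pow, smul_eq_mul]
      push_cast
      ring
    · intro u hu
      rw [Set.uIcc_of_le hlk.le] at hu
      rw [hF_def]; simp only [max_eq_right hu.1]
  rw [hsplit, hI1, hI2]
  ring

/-- The volume of `P₂(m, l, k) = {x ∈ ℝ⁴ : x ≥ 0, Σxᵢ ≤ m, l ≤ x₃ + x₄ ≤ k}`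
is `((m - l)³(m + 3l) - (m - k)³(m + 3k))/24`. -/
theorem volume_P2 (m l k : ℝ) (hm : 4 ≤ m) (hl : 0 < l) (hlk : l < k) (hkm : k < m) :
    MeasureTheory.volume {x : Fin 4 → ℝ | (∀ i, 0 ≤ x i) ∧
        x 0 + x 1 + x 2 + x 3 ≤ m ∧ l ≤ x 2 + x 3 ∧ x 2 + x 3 ≤ k} =
      ENNReal.ofReal (((m - l) ^ 3 * (m + 3 * l) - (m - k) ^ 3 * (m + 3 * k)) / 24) := by
  set T : Set (ℝ × ℝ × ℝ × ℝ) := {p | 0 ≤ p.2.2.1 ∧ 0 ≤ p.2.2.2 ∧ 0 ≤ p.1 ∧ 0 ≤ p.2.1 ∧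
        p.2.2.1 + p.2.2.2 + p.1 + p.2.1 ≤ m ∧ l ≤ p.1 + p.2.1 ∧ p.1 + p.2.1 ≤ k} with hT_def
  have hTmeas : MeasurableSet T := by
    apply IsClosed.measurableSet
    rw [hT_def]
    simp only [Set.setOf_and]
    repeat' apply IsClosed.inter
    all_goals exact isClosed_le (by fun_prop) (by fun_prop)
  have mp1 := MeasureTheory.volume_preserving_piFinSuccAbove (fun _ : Fin 4 => ℝ) 2
  have mp2 := (MeasurePreserving.id (volume : Measure ℝ)).prod
    (MeasureTheory.volume_preserving_piFinSuccAbove (fun _ : Fin 3 => ℝ) 2)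
  have mp3 := (MeasurePreserving.id (volume : Measure ℝ)).prod
    ((MeasurePreserving.id (volume : Measure ℝ)).prod
      (MeasureTheory.volume_preserving_finTwoArrow ℝ))
  have mp := (mp3.comp mp2).comp mp1
  have hpre : {x : Fin 4 → ℝ | (∀ i, 0 ≤ x i) ∧
        x 0 + x 1 + x 2 + x 3 ≤ m ∧ l ≤ x 2 + x 3 ∧ x 2 + x 3 ≤ k} =
      ((Prod.map (id : ℝ → ℝ) (Prod.map (id : ℝ → ℝ) ⇑(MeasurableEquiv.finTwoArrow (α := ℝ))) ∘
        Prod.map (id : ℝ → ℝ) ⇑(MeasurableEquiv.piFinSuccAbove (fun _ : Fin 3 => ℝ) 2)) ∘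
        ⇑(MeasurableEquiv.piFinSuccAbove (fun _ : Fin 4 => ℝ) 2)) ⁻¹' T := by
    ext x
    have happ : ((Prod.map (id : ℝ → ℝ)
        (Prod.map (id : ℝ → ℝ) ⇑(MeasurableEquiv.finTwoArrow (α := ℝ))) ∘
        Prod.map (id : ℝ → ℝ) ⇑(MeasurableEquiv.piFinSuccAbove (fun _ : Fin 3 => ℝ) 2)) ∘
        ⇑(MeasurableEquiv.piFinSuccAbove (fun _ : Fin 4 => ℝ) 2)) x
        = (x 2, (x 3, (x 0, x 1))) := rfl
    simp only [mem_preimage, happ, hT_def, mem_setOf_eq]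
    constructor
    · rintro ⟨h0, h1, h2, h3⟩
      exact ⟨h0 0, h0 1, h0 2, h0 3, h1, h2, h3⟩
    · rintro ⟨a0, a1, a2, a3, h1, h2, h3⟩
      refine ⟨?_, h1, h2, h3⟩
      intro i; fin_cases i <;> assumption
  rw [hpre, mp.measure_preimage hTmeas.nullMeasurableSet]
  exact volT m l k hm hl hlk hkm
end
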